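/- Soundness of shielding via abstraction (main theorem): let M be an FSRS, M' an FSRS that abstracts M, A a safety automaton realizing specification φ, and σ a controller strategy such that at every point σ only plays actions from the safe-region of the product game M' || A (i.e., actions a1 such that all a2-successors from the current product state remain in the winning region). Then for every environment strategy τ in M, every finite observable trace of M under σ and τ belongs to φ. -/

import Mathlib

/-! A shielded play of `M` is shadowed step by step by a play of the product game `M' || A`:
since `M'` abstracts `M`, every history of `M` is also a history of `M'` with the same last
output, so the automaton component of the product state is exactly the automaton state reached
on the observed trace. The shield keeps the product state in the winning region, whose states
all carry an accepting automaton component. -/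

/-- Partial run of a Mealy machine from a state over an input word. -/
def mrun {S I : Type} (E : S → I → Option S) : S → List I → Option S
  | s, [] => some s
  | s, a :: w => (E s a).bind fun s' => mrun E s' w

/-- Output of the last transition of a Mealy machine over a (nonempty) input word. -/
def mout {S I O : Type} (E : S → I → Option S) (Λ : S → I → Option O) : S → List I → Option O
  | _, [] => none
  | s, [a] => Λ s a
  | s, a :: b :: w => (E s a).bind fun s' => mout E Λ s' (b :: w)

/-- A Mealy machine with partial transition and output functions. -/
structure Mealy (I O : Type) where
  S : Type
  init : S
  E : S → I → Option S
  lam : S → I → Option O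

/-- State reached from the initial state over an input word. -/
def Mealy.run {I O : Type} (M : Mealy I O) (w : List I) : Option M.S := mrun M.E M.init w

/-- Output of the last transition over an input word. -/
def Mealy.output {I O : Type} (M : Mealy I O) (w : List I) : Option O := mout M.E M.lam M.init w

/-- M' abstracts M: every input word defined in M is defined in M', with equal outputs. -/
def Abstracts {I O : Type} (M' M : Mealy I O) : Prop :=
  ∀ w : List I, (M.run w).isSome → (M'.run w).isSome ∧ M'.output w = M.output w

/-- Observable input/output trace of a Mealy machine along an input word. -/
def mtrace {S I O : Type} (E : S → I → Option S) (Λ : S → I → Option O) :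
    S → List I → Option (List (I × O))
  | _, [] => some []
  | s, a :: w =>
      (E s a).bind fun s' => (Λ s a).bind fun b => (mtrace E Λ s' w).map fun t => (a, b) :: t


section Mealy

variable {S I O : Type} (E : S → I → Option S) (Λ : S → I → Option O)

lemma mrun_append (w : List I) (a : I) (s : S) :
    mrun E s (w ++ [a]) = (mrun E s w).bind fun s₁ => E s₁ a := by
  induction w generalizing s with
  | nil => simp [mrun]
  | cons x w ih => cases hx : E s x <;> simp [mrun, hx, ih]

lemma mout_append (w : List I) (a : I) (s : S) :
    mout E Λ s (w ++ [a]) = (mrun E s w).bind fun s₁ => Λ s₁ a := by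
  induction w generalizing s with
  | nil => simp [mout, mrun]
  | cons x w ih =>
    cases w with
    | nil => cases hx : E s x <;> simp [mout, mrun, hx]
    | cons y w =>
      cases hx : E s x <;> simp only [mout, mrun, hx, List.cons_append, Option.bind_none,
        Option.bind_some]
      simpa [mrun] using ih _

lemma mtrace_append (w : List I) (a : I) (s : S) :
    mtrace E Λ s (w ++ [a]) =
      (mrun E s w).bind fun s₁ => (mtrace E Λ s w).bind fun t =>
        (E s₁ a).bind fun _ => (Λ s₁ a).map fun b => t ++ [(a, b)] := by
  induction w generalizing s with
  | nil => cases h₁ : E s a <;> cases h₂ : Λ s a <;> simp [mtrace, mrun, h₁, h₂]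
  | cons x w ih =>
    cases h₁ : E s x <;> cases h₂ : Λ s x <;> simp [mtrace, mrun, h₁, h₂, ih]
    cases mrun E _ w <;> simp
    cases mtrace E Λ _ w <;> simp
    cases E _ a <;> simp
    cases Λ _ a <;> simp

end Mealy

/-- The transition function of the product game `M' || A`. -/
def productStep {S' Q A O : Type} (E' : S' → A → Option S') (Λ' : S' → A → Option O)
    (N : Q → A × O → Q) (g : S' × Q) (a : A) : Option (S' × Q) :=
  (E' g.1 a).bind fun l => (Λ' g.1 a).map fun b => (l, N g.2 (a, b))

def winningRegion {X Q A1 A2 : Type} (G : X × Q → A1 × A2 → Option (X × Q)) (F : Set Q) :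
    Set (X × Q) :=
  ⋃₀ {T | ∀ g ∈ T, g.2 ∈ F ∧
    ∃ a1 : A1, ∀ (a2 : A2) (g' : X × Q), G g (a1, a2) = some g' → g' ∈ T}

lemma snd_mem_of_mem_winningRegion {X Q A1 A2 : Type} {G : X × Q → A1 × A2 → Option (X × Q)}
    {F : Set Q} {g : X × Q} (hg : g ∈ winningRegion G F) : g.2 ∈ F := by
  obtain ⟨T, hT, hgT⟩ := hg
  exact (hT g hgT).1

def ConsistentWith {A1 A2 : Type} (σ : List (A1 × A2) → A1) (w : List (A1 × A2)) : Prop :=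
  ∀ (k : ℕ) (h : k < w.length), (w.get ⟨k, h⟩).1 = σ (w.take k)

lemma consistentWith_append {A1 A2 : Type} {σ : List (A1 × A2) → A1} {w : List (A1 × A2)}
    {a : A1 × A2} (h : ConsistentWith σ (w ++ [a])) : ConsistentWith σ w ∧ a.1 = σ w := by
  constructor
  · intro k hk
    have := h k (by simp; omega)
    simp only [List.get_eq_getElem] at this ⊢
    rwa [List.getElem_append_left, List.take_append_of_le_length hk.le] at this
  · have := h w.length (by simp)
    simp only [List.get_eq_getElem] at this
    rwa [List.getElem_concat_length rfl, List.take_left] at this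

section Product

variable {S S' Q A O : Type} {E : S → A → Option S} {Λ : S → A → Option O} {init : S}
  {E' : S' → A → Option S'} {Λ' : S' → A → Option O} {init' : S'} {N : Q → A × O → Q}

lemma mrun_fst_of_mrun_productStep {w : List A} {l : S'} {q : Q} {g : S' × Q}
    (h : mrun (productStep E' Λ' N) (l, q) w = some g) : mrun E' l w = some g.1 := by
  induction w generalizing l q with
  | nil => simp only [mrun, Option.some.injEq] at h ⊢; rw [← h]
  | cons x w ih =>
    simp only [mrun, productStep, Option.bind_eq_some_iff, Option.map_eq_some_iff] at h ⊢
    obtain ⟨_, ⟨l', hl', b, -, rfl⟩, hrest⟩ := h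
    exact ⟨l', hl', ih hrest⟩

lemma exists_productStep_of_abstracts
    (habs : ∀ w : List A, (mrun E init w).isSome →
      (mrun E' init' w).isSome ∧ mout E' Λ' init' w = mout E Λ init w) {w : List A} {a : A} {q : Q} {g : S' × Q} {s s₂ : S}
    {b : O} (hg : mrun (productStep E' Λ' N) (init', q) w = some g)
    (hs : mrun E init w = some s) (hE : E s a = some s₂) (hΛ : Λ s a = some b) :
    ∃ l, productStep E' Λ' N g a = some (l, N g.2 (a, b)) := by
  have hrun' : mrun E' init' w = some g.1 := mrun_fst_of_mrun_productStep hg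
  obtain ⟨hdef', hout⟩ := habs (w ++ [a]) (by simp [mrun_append, hs, hE])
  have hΛ' : Λ' g.1 a = some b := by
    simpa [mout_append, hrun', hs, hΛ] using hout
  obtain ⟨l, hl⟩ : ∃ l, E' g.1 a = some l := by
    simpa [mrun_append, hrun', Option.isSome_iff_exists] using hdef'
  exact ⟨l, by simp [productStep, hl, hΛ']⟩

end Product

section Shield

variable {S S' Q A1 A2 O : Type} {E : S → A1 × A2 → Option S} {Λ : S → A1 × A2 → Option O}
  {init : S} {E' : S' → A1 × A2 → Option S'} {Λ' : S' → A1 × A2 → Option O} {init' : S'}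
  {N : Q → (A1 × A2) × O → Q}

lemma exists_mrun_productStep_mem
    (habs : ∀ w : List (A1 × A2), (mrun E init w).isSome →
      (mrun E' init' w).isSome ∧ mout E' Λ' init' w = mout E Λ init w)
    {q0 : Q} {W : Set (S' × Q)} {σ : List (A1 × A2) → A1} (hinit : (init', q0) ∈ W)
    (hσ : ∀ w : List (A1 × A2), (mrun E init w).isSome →
      ∀ g : S' × Q, mrun (productStep E' Λ' N) (init', q0) w = some g →
        ∀ (a2 : A2) (g' : S' × Q), productStep E' Λ' N g (σ w, a2) = some g' → g' ∈ W)
    {w : List (A1 × A2)} (hw : ConsistentWith σ w) {t : List ((A1 × A2) × O)}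
    (ht : mtrace E Λ init w = some t) :
    ∃ g, mrun (productStep E' Λ' N) (init', q0) w = some g ∧ g ∈ W ∧ g.2 = t.foldl N q0 := by
  induction w using List.reverseRecOn generalizing t with
  | nil =>
    simp only [mtrace, Option.some.injEq] at ht
    exact ⟨(init', q0), rfl, hinit, by simp [← ht]⟩
  | append_singleton w a ih =>
    obtain ⟨hw, ha⟩ := consistentWith_append hw
    simp only [mtrace_append, Option.bind_eq_some_iff, Option.map_eq_some_iff] at ht
    obtain ⟨s, hs, t, ht, s₂, hE, b, hΛ, rfl⟩ := ht
    obtain ⟨g, hg, -, hgq⟩ := ih hw ht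
    obtain ⟨l, hl⟩ := exists_productStep_of_abstracts habs hg hs hE hΛ
    refine ⟨(l, N g.2 (a, b)), by simp [mrun_append, hg, hl], ?_, by simp [hgq]⟩
    exact hσ w (by simp [hs]) g hg a.2 _ (by rw [← ha]; exact hl)

end Shield

/-- Soundness of shielding via abstraction. Let `M'` abstract `M`, let the
safety automaton `(Q, q0, F, N)` realize the specification, and let `σ` be a controller
strategy that, after any defined history, only plays actions all of whose environment
successors in the product game `M' || A` stay in the winning region `W`. If the initial
product state is in `W`, then every observable trace of `M` consistent with `σ` ends in a
safe automaton state, i.e. belongs to the specification. -/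
theorem shielding_sound {S S' Q A1 A2 O : Type}
    (E : S → A1 × A2 → Option S) (Λ : S → A1 × A2 → Option O) (init : S)
    (E' : S' → A1 × A2 → Option S') (Λ' : S' → A1 × A2 → Option O) (init' : S')
    (N : Q → (A1 × A2) × O → Q) (q0 : Q) (F : Set Q)
    (habs : ∀ w : List (A1 × A2), (mrun E init w).isSome →
      (mrun E' init' w).isSome ∧ mout E' Λ' init' w = mout E Λ init w)
    (σ : List (A1 × A2) → A1) :
    let EG : S' × Q → A1 × A2 → Option (S' × Q) := fun g a =>
      (E' g.1 a).bind fun l' => (Λ' g.1 a).map fun b => (l', N g.2 (a, b))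
    let W : Set (S' × Q) :=
      ⋃₀ {T | ∀ g ∈ T, g.2 ∈ F ∧
        ∃ a1 : A1, ∀ (a2 : A2) (g' : S' × Q), EG g (a1, a2) = some g' → g' ∈ T}
    (init', q0) ∈ W →
    (∀ w : List (A1 × A2), (mrun E init w).isSome →
      ∀ g : S' × Q, mrun EG (init', q0) w = some g →
        ∀ (a2 : A2) (g' : S' × Q), EG g (σ w, a2) = some g' → g' ∈ W) →
    ∀ w : List (A1 × A2),
      (∀ (k : ℕ) (h : k < w.length), (w.get ⟨k, h⟩).1 = σ (w.take k)) →
      ∀ t : List ((A1 × A2) × O), mtrace E Λ init w = some t → t.foldl N q0 ∈ F := by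
  intro EG W hinit hσ w hw t ht
  obtain ⟨g, -, hgW, hgq⟩ := exists_mrun_productStep_mem habs hinit hσ hw ht
  exact hgq ▸ snd_mem_of_mem_winningRegion hgW
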